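/- arXiv:2003.10062 — 3 statements merged into one kernel-verified Lean document; each statement's English description precedes it below -/
import Mathlib

section
/- Let 0 ≤ r < a be real numbers and let f : ℝ → ℝ be continuous on [r, a]. Then the function s ↦ f(s)·s/√(s² − r²) is integrable on (r, a), and ∫_{−√(a²−r²)}^{√(a²−r²)} f(√(r² + z²)) dz = 2 ∫_r^a f(s)·s/√(s² − r²) ds. -/
/-!
The map `z ↦ √(r² + z²)` is a strictly increasing differentiable bijection from
`(0, √(a² − r²))` onto `(r, a)` whose Jacobian `z / √(r² + z²) = √(s² − r²) / s` is the
reciprocal of the weight `s / √(s² − r²)`. The Jacobian change of variables for injective maps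
needs no regularity at the singular endpoint `s = r`, so it turns both the integrability and the
integral of the weighted function on `(r, a)` into those of the continuous function
`z ↦ f (√(r² + z²))` on `(0, √(a² − r²))`. That function is even, whence the factor `2`.
-/

open MeasureTheory Set

section SqrtSqAddSq

variable {r a : ℝ}

theorem sqrt_sq_sqrt_sq_add_sq_sub_sq (r z : ℝ) : √(√(r ^ 2 + z ^ 2) ^ 2 - r ^ 2) = |z| := by
  rw [Real.sq_sqrt (by positivity), add_sub_cancel_left, Real.sqrt_sq_eq_abs]

theorem sqrt_sq_add_sq_sqrt_sq_sub_sq (hr : 0 ≤ r) (hra : r ≤ a) :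
    √(r ^ 2 + √(a ^ 2 - r ^ 2) ^ 2) = a := by
  rw [Real.sq_sqrt (by nlinarith), add_sub_cancel, Real.sqrt_sq (hr.trans hra)]

theorem strictMonoOn_sqrt_sq_add_sq (r : ℝ) :
    StrictMonoOn (fun z => √(r ^ 2 + z ^ 2)) (Ici 0) :=
  fun _ hx _ _ hxy => Real.sqrt_lt_sqrt (by positivity) (by gcongr)

theorem hasDerivAt_sqrt_sq_add_sq (r : ℝ) {z : ℝ} (hz : z ≠ 0) :
    HasDerivAt (fun z => √(r ^ 2 + z ^ 2)) (z / √(r ^ 2 + z ^ 2)) z := by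
  have hpos : 0 < r ^ 2 + z ^ 2 := by positivity
  convert ((hasDerivAt_pow 2 z).const_add (r ^ 2)).sqrt hpos.ne' using 1
  field_simp
  ring

theorem mapsTo_sqrt_sq_add_sq_Icc (hr : 0 ≤ r) (hra : r ≤ a) :
    MapsTo (fun z => √(r ^ 2 + z ^ 2)) (Icc 0 √(a ^ 2 - r ^ 2)) (Icc r a) := by
  intro z hz
  have hmono := (strictMonoOn_sqrt_sq_add_sq r).monotoneOn
  have h0 : (0 : ℝ) ∈ Ici 0 := self_mem_Ici
  refine ⟨?_, ?_⟩
  · simpa [Real.sqrt_sq hr] using hmono h0 hz.1 hz.1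
  · simpa [sqrt_sq_add_sq_sqrt_sq_sub_sq hr hra] using
      hmono hz.1 (Real.sqrt_nonneg _) hz.2

theorem image_sqrt_sq_add_sq_Ioo (hr : 0 ≤ r) (hra : r ≤ a) :
    (fun z => √(r ^ 2 + z ^ 2)) '' Ioo 0 √(a ^ 2 - r ^ 2) = Ioo r a := by
  rw [ContinuousOn.image_Ioo_of_strictMonoOn (Real.sqrt_nonneg _) (by fun_prop)
    ((strictMonoOn_sqrt_sq_add_sq r).mono Icc_subset_Ici_self),
    sqrt_sq_add_sq_sqrt_sq_sub_sq hr hra, zero_pow two_ne_zero, add_zero, Real.sqrt_sq hr]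

end SqrtSqAddSq

section WeightedChangeOfVariables

variable {E : Type*} [NormedAddCommGroup E] [NormedSpace ℝ E]

theorem eqOn_abs_deriv_smul_div_sqrt_sq_sub_sq_smul (r : ℝ) (G : ℝ → E) :
    EqOn (fun z => |z / √(r ^ 2 + z ^ 2)| •
        ((√(r ^ 2 + z ^ 2) / √(√(r ^ 2 + z ^ 2) ^ 2 - r ^ 2)) • G √(r ^ 2 + z ^ 2)))
      (fun z => G √(r ^ 2 + z ^ 2)) (Ioi 0) := by
  intro z (hz : 0 < z)
  have hsqrt : 0 < √(r ^ 2 + z ^ 2) := Real.sqrt_pos.2 (by positivity)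
  simp only [sqrt_sq_sqrt_sq_add_sq_sub_sq, abs_of_pos hz, abs_of_pos (div_pos hz hsqrt), smul_smul]
  rw [div_mul_div_comm, mul_comm z, div_self (by positivity), one_smul]

theorem integrableOn_Ioo_div_sqrt_sq_sub_sq_smul_iff {r a : ℝ} (hr : 0 ≤ r) (hra : r ≤ a)
    (G : ℝ → E) :
    IntegrableOn (fun s => (s / √(s ^ 2 - r ^ 2)) • G s) (Ioo r a) ↔
      IntegrableOn (fun z => G √(r ^ 2 + z ^ 2)) (Ioo 0 √(a ^ 2 - r ^ 2)) := by
  rw [← image_sqrt_sq_add_sq_Ioo hr hra, integrableOn_image_iff_integrableOn_abs_deriv_smul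
    measurableSet_Ioo (fun z hz => (hasDerivAt_sqrt_sq_add_sq r hz.1.ne').hasDerivWithinAt)
    ((strictMonoOn_sqrt_sq_add_sq r).injOn.mono fun z hz => hz.1.le)]
  exact integrableOn_congr_fun
    ((eqOn_abs_deriv_smul_div_sqrt_sq_sub_sq_smul r G).mono Ioo_subset_Ioi_self) measurableSet_Ioo

theorem integral_Ioo_div_sqrt_sq_sub_sq_smul {r a : ℝ} (hr : 0 ≤ r) (hra : r ≤ a)
    (G : ℝ → E) :
    ∫ s in Ioo r a, (s / √(s ^ 2 - r ^ 2)) • G s =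
      ∫ z in Ioo 0 √(a ^ 2 - r ^ 2), G √(r ^ 2 + z ^ 2) := by
  rw [← image_sqrt_sq_add_sq_Ioo hr hra, integral_image_eq_integral_abs_deriv_smul
    measurableSet_Ioo (fun z hz => (hasDerivAt_sqrt_sq_add_sq r hz.1.ne').hasDerivWithinAt)
    ((strictMonoOn_sqrt_sq_add_sq r).injOn.mono fun z hz => hz.1.le)]
  exact setIntegral_congr_fun measurableSet_Ioo
    ((eqOn_abs_deriv_smul_div_sqrt_sq_sub_sq_smul r G).mono Ioo_subset_Ioi_self)

end WeightedChangeOfVariables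

theorem intervalIntegral.integral_neg_left_eq_two_smul_of_even {E : Type*} [NormedAddCommGroup E]
    [NormedSpace ℝ E] {g : ℝ → E} (hg : Function.Even g) {L : ℝ}
    (hint : IntervalIntegrable g volume 0 L) :
    ∫ x in -L..L, g x = (2 : ℝ) • ∫ x in 0..L, g x := by
  have hint' : IntervalIntegrable g volume (-L) 0 := by
    simpa [hg _] using ((IntervalIntegrable.iff_comp_neg).mp hint).symm
  rw [← intervalIntegral.integral_add_adjacent_intervals hint' hint, two_smul]
  congr 1
  simpa [hg _] using (intervalIntegral.integral_comp_neg (a := 0) (b := L) g).symm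

/-- One-dimensional change of variables `s = √(r² + z²)`: for `0 ≤ r < a` and `f`
continuous on `[r, a]`, the function `s ↦ f(s)·s/√(s² − r²)` is integrable on `(r, a)`,
and `∫_{−√(a²−r²)}^{√(a²−r²)} f(√(r² + z²)) dz = 2 ∫_r^a f(s)·s/√(s² − r²) ds`. -/
theorem integral_radial_change_of_variables (r a : ℝ) (hr : 0 ≤ r) (hra : r < a)
    (f : ℝ → ℝ) (hf : ContinuousOn f (Set.Icc r a)) :
    IntegrableOn (fun s => f s * s / Real.sqrt (s ^ 2 - r ^ 2)) (Set.Ioo r a) volume ∧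
      ∫ z in -Real.sqrt (a ^ 2 - r ^ 2)..Real.sqrt (a ^ 2 - r ^ 2),
          f (Real.sqrt (r ^ 2 + z ^ 2)) =
        2 * ∫ s in r..a, f s * s / Real.sqrt (s ^ 2 - r ^ 2) := by
  have hweight :
      (fun s => f s * s / √(s ^ 2 - r ^ 2)) = fun s => (s / √(s ^ 2 - r ^ 2)) • f s := by
    ext s
    rw [smul_eq_mul, mul_div_assoc, mul_comm]
  have hcont : ContinuousOn (fun z => f √(r ^ 2 + z ^ 2)) (Icc 0 √(a ^ 2 - r ^ 2)) :=
    hf.comp (by fun_prop) (mapsTo_sqrt_sq_add_sq_Icc hr hra.le)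
  have heven : Function.Even fun z => f √(r ^ 2 + z ^ 2) := fun z => by simp only [neg_sq]
  refine ⟨?_, ?_⟩
  · rw [hweight, integrableOn_Ioo_div_sqrt_sq_sub_sq_smul_iff hr hra.le]
    exact (hcont.integrableOn_Icc).mono_set Ioo_subset_Icc_self
  · rw [intervalIntegral.integral_neg_left_eq_two_smul_of_even heven
      (hcont.intervalIntegrable_of_Icc (Real.sqrt_nonneg _)), smul_eq_mul, hweight,
      intervalIntegral.integral_of_le (Real.sqrt_nonneg _), intervalIntegral.integral_of_le hra.le,
      integral_Ioc_eq_integral_Ioo, integral_Ioc_eq_integral_Ioo,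
      integral_Ioo_div_sqrt_sq_sub_sq_smul hr hra.le]
end

section
/- Let a > 0, α > 0 and let m ≥ 1 be a natural number. Let φ be the Kaiser–Bessel window function with parameters (a, α, m) and let P(φ)(y) = ∫_ℝ φ(y₁, y₂, z) dz be its X-ray projection. Then for every y ∈ ℝ² with ‖y‖ ≤ a, P(φ)(y) = a · A · β_a(‖y‖)^{m + 1/2} · I_{m + 1/2}(α · β_a(‖y‖)), where A = √(2π/α) / I_m(α) and β_a(r) = √(1 − (r/a)²). -/
open MeasureTheory

/-- Modified Bessel function of the first kind (Poisson integral representation). -/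
noncomputable def besselI (ν x : ℝ) : ℝ :=
  ((x / 2) ^ ν / (Real.sqrt Real.pi * Real.Gamma (ν + 1 / 2))) *
    ∫ t in (-1 : ℝ)..1, Real.exp (x * t) * (1 - t ^ 2) ^ (ν - 1 / 2)

/-- Euclidean norm on `Fin n → ℝ`. -/
noncomputable def euclNorm {n : ℕ} (x : Fin n → ℝ) : ℝ :=
  Real.sqrt (∑ i, x i ^ 2)

/-- The Kaiser–Bessel window function with window radius `a`, shape parameter `α`
and order `m`. -/
noncomputable def kbwf (a α : ℝ) (m : ℕ) (x : Fin 3 → ℝ) : ℝ :=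
  if euclNorm x ≤ a then
    (1 / besselI m α) * Real.sqrt (1 - (euclNorm x / a) ^ 2) ^ m *
      besselI m (α * Real.sqrt (1 - (euclNorm x / a) ^ 2))
  else 0

/-- X-ray projection along the third axis: `P(φ)(y) = ∫_ℝ φ(y₁, y₂, z) dz`. -/
noncomputable def xray (φ : (Fin 3 → ℝ) → ℝ) (y : Fin 2 → ℝ) : ℝ :=
  ∫ z : ℝ, φ ![y 0, y 1, z]

/-- `β_a(r) = √(1 − (r/a)²)`. -/
noncomputable def betaA (a r : ℝ) : ℝ :=
  Real.sqrt (1 - (r / a) ^ 2)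

/-!
Write the Bessel factor through its Poisson integral in the scaled form
`s ^ ν I_ν (c s) = (c / 2) ^ ν / (√π Γ(ν + 1/2)) * ∫ w, exp (c w) (s² - w²)₊ ^ (ν - 1/2)`,
where `(·)₊ = max · 0`. After the substitution `z = a * u` the projection at `y` becomes, with
`b = β_a(‖y‖)`, a constant times the plane integral of `exp (α w) (b² - u² - w²)₊ ^ (m - 1/2)`.
Integrating out `u` first produces `(b² - w²)₊ ^ m` times the Wallis-type constant
`∫₋₁¹ (1 - t²) ^ (m - 1/2) = √π Γ(m + 1/2) / Γ(m + 1)`, and what remains is the same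
Poisson integral, now of order `m + 1/2` at the point `α b`.
-/

open Real Set

section PowerKernel

variable {e : ℝ}

theorem integral_mul_max_sub_sq_rpow_eq_intervalIntegral (g : ℝ → ℝ) (q : ℝ) (he : 0 < e) :
    ∫ x, g x * max (q - x ^ 2) 0 ^ e = ∫ x in -√q..√q, g x * (q - x ^ 2) ^ e := by
  have hsupp : Function.support (fun x => g x * max (q - x ^ 2) 0 ^ e) ⊆ Ioc (-√q) √q := by
    intro x hx
    have hpos : x ^ 2 < q := by
      by_contra! h
      exact hx (by simp [max_eq_right (sub_nonpos.mpr h), zero_rpow he.ne'])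
    exact ⟨neg_sqrt_lt_of_sq_lt hpos, (lt_sqrt_of_sq_lt hpos).le⟩
  rcases le_or_gt q 0 with hq | hq
  · rw [sqrt_eq_zero_of_nonpos hq, neg_zero, intervalIntegral.integral_same,
      ← intervalIntegral.integral_eq_integral_of_support_subset hsupp, sqrt_eq_zero_of_nonpos hq,
      neg_zero, intervalIntegral.integral_same]
  rw [← intervalIntegral.integral_eq_integral_of_support_subset hsupp]
  refine intervalIntegral.integral_congr fun x hx => ?_
  rw [uIcc_of_le (neg_le_self (sqrt_nonneg q))] at hx
  have hxq : x ^ 2 ≤ q := by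
    simpa [sq_sqrt hq.le] using sq_le_sq' hx.1 hx.2
  simp only [max_eq_left (sub_nonneg.mpr hxq)]

theorem integral_mul_sub_sq_rpow_of_pos (g : ℝ → ℝ) (e : ℝ) {q : ℝ} (hq : 0 < q) :
    ∫ x in -√q..√q, g x * (q - x ^ 2) ^ e =
      q ^ (e + 1 / 2) * ∫ t in (-1 : ℝ)..1, g (√q * t) * (1 - t ^ 2) ^ e := by
  have hp : 0 < √q := sqrt_pos.mpr hq
  have hscale := intervalIntegral.smul_integral_comp_mul_left
    (E := ℝ) (f := fun x => g x * (q - x ^ 2) ^ e) (a := -1) (b := 1) √q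
  simp only [mul_neg, mul_one, smul_eq_mul] at hscale
  rw [← hscale, rpow_add hq, ← sqrt_eq_rpow, mul_comm (q ^ e), mul_assoc]
  congr 1
  rw [← intervalIntegral.integral_const_mul]
  refine intervalIntegral.integral_congr fun t ht => ?_
  rw [uIcc_of_le (by norm_num : (-1 : ℝ) ≤ 1), mem_Icc] at ht
  have h1 : 0 ≤ 1 - t ^ 2 := by nlinarith
  rw [mul_pow, sq_sqrt hq.le, show q - q * t ^ 2 = q * (1 - t ^ 2) by ring,
    mul_rpow hq.le h1]
  ring

theorem integral_mul_max_sub_sq_rpow (g : ℝ → ℝ) (q : ℝ) (he : 0 < e) :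
    ∫ x, g x * max (q - x ^ 2) 0 ^ e =
      max q 0 ^ (e + 1 / 2) * ∫ t in (-1 : ℝ)..1, g (√q * t) * (1 - t ^ 2) ^ e := by
  rw [integral_mul_max_sub_sq_rpow_eq_intervalIntegral g q he]
  rcases le_or_gt q 0 with hq | hq
  · rw [sqrt_eq_zero_of_nonpos hq, max_eq_right hq, zero_rpow (by linarith)]
    simp
  · rw [max_eq_left hq.le, integral_mul_sub_sq_rpow_of_pos g e hq]

theorem integral_max_sub_sq_rpow (q : ℝ) (he : 0 < e) :
    ∫ x, max (q - x ^ 2) 0 ^ e = max q 0 ^ (e + 1 / 2) * ∫ t in (-1 : ℝ)..1, (1 - t ^ 2) ^ e := by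
  simpa using integral_mul_max_sub_sq_rpow (fun _ => 1) q he

theorem integral_integral_mul_max_sub_sq_sub_sq_rpow_swap {g : ℝ → ℝ} (hg : Continuous g)
    (q : ℝ) (he : 0 < e) :
    ∫ u, ∫ w, g w * max (q - u ^ 2 - w ^ 2) 0 ^ e =
      ∫ w, g w * ∫ u, max (q - w ^ 2 - u ^ 2) 0 ^ e := by
  set R := |q| + 1
  have hcont : Continuous (Function.uncurry fun u w : ℝ => g w * max (q - u ^ 2 - w ^ 2) 0 ^ e) :=
    (hg.comp continuous_snd).mul <| Continuous.rpow_const (by fun_prop) fun _ => Or.inr he.le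
  have hsupp : HasCompactSupport
      (Function.uncurry fun u w : ℝ => g w * max (q - u ^ 2 - w ^ 2) 0 ^ e) := by
    refine HasCompactSupport.intro (isCompact_Icc.prod isCompact_Icc :
      IsCompact (Icc (-R) R ×ˢ Icc (-R) R)) ?_
    rintro ⟨u, w⟩ huw
    have hR : R < |u| ∨ R < |w| := by
      simpa only [mem_prod, mem_Icc, ← abs_le, not_and_or, not_le] using huw
    have hneg : q - u ^ 2 - w ^ 2 ≤ 0 := by
      rcases hR with h | h <;> nlinarith [le_abs_self q, abs_nonneg q, sq_abs u, sq_abs w]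
    simp [max_eq_right hneg, zero_rpow he.ne']
  rw [integral_integral_swap_of_hasCompactSupport hcont hsupp]
  congr 1 with w
  rw [← integral_const_mul]
  simp only [sub_right_comm q]

end PowerKernel

theorem integral_one_sub_sq_rpow_add_one {s : ℝ} (hs : 0 ≤ s) :
    ∫ v in (-1 : ℝ)..1, (1 - v ^ 2) ^ (s + 1) =
      (2 * s + 2) / (2 * s + 3) * ∫ v in (-1 : ℝ)..1, (1 - v ^ 2) ^ s := by
  have hderiv : ∀ v ∈ uIcc (-1 : ℝ) 1, HasDerivAt (fun v => v * (1 - v ^ 2) ^ (s + 1))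
      ((2 * s + 3) * (1 - v ^ 2) ^ (s + 1) - (2 * s + 2) * (1 - v ^ 2) ^ s) v := by
    intro v hv
    rw [uIcc_of_le (by norm_num), mem_Icc] at hv
    have h0 : 0 ≤ 1 - v ^ 2 := by nlinarith
    refine ((hasDerivAt_id' v).mul
      (((hasDerivAt_pow 2 v).const_sub 1).rpow_const (p := s + 1) (Or.inr (by linarith))))
      |>.congr_deriv ?_
    rw [rpow_add_one' h0 (by linarith), add_sub_cancel_right]
    push_cast
    ring
  have hint : ∀ r : ℝ, 0 ≤ r → IntervalIntegrable (fun v : ℝ => (1 - v ^ 2) ^ r) volume (-1) 1 :=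
    fun r hr => (Continuous.rpow_const (by fun_prop) fun _ => Or.inr hr).intervalIntegrable _ _
  have hFTC := intervalIntegral.integral_eq_sub_of_hasDerivAt hderiv
    (((hint _ (by linarith)).const_mul _).sub ((hint s hs).const_mul _))
  rw [intervalIntegral.integral_sub ((hint _ (by linarith)).const_mul _)
      ((hint s hs).const_mul _), intervalIntegral.integral_const_mul,
    intervalIntegral.integral_const_mul] at hFTC
  norm_num [zero_rpow (by linarith : s + 1 ≠ 0)] at hFTC
  field_simp
  linarith

theorem integral_one_sub_sq_rpow_natCast_sub_half {m : ℕ} (hm : 1 ≤ m) :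
    ∫ v in (-1 : ℝ)..1, (1 - v ^ 2) ^ ((m : ℝ) - 1 / 2) =
      √π * Gamma ((m : ℝ) + 1 / 2) / Gamma ((m : ℝ) + 1) := by
  induction m, hm using Nat.le_induction with
  | base =>
    have hsqrt : ∀ v : ℝ, (1 - v ^ 2) ^ (((1 : ℕ) : ℝ) - 1 / 2) = √(1 - v ^ 2) := fun v => by
      rw [sqrt_eq_rpow]; norm_num
    simp only [hsqrt, integral_sqrt_one_sub_sq]
    rw [show ((1 : ℕ) : ℝ) + 1 / 2 = 1 / 2 + 1 by norm_num, Gamma_add_one (by norm_num),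
      Gamma_one_half_eq, show ((1 : ℕ) : ℝ) + 1 = 2 by norm_num, Gamma_two]
    linear_combination (-1 / 2 : ℝ) * mul_self_sqrt pi_pos.le
  | succ n hn ih =>
    have hn' : (1 : ℝ) ≤ n := by exact_mod_cast hn
    push_cast
    rw [show (n : ℝ) + 1 - 1 / 2 = (n - 1 / 2) + 1 by ring,
      integral_one_sub_sq_rpow_add_one (by linarith), ih,
      show (n : ℝ) + 1 + 1 / 2 = (n + 1 / 2) + 1 by ring,
      Gamma_add_one (s := (n : ℝ) + 1 / 2) (by positivity),
      Gamma_add_one (s := (n : ℝ) + 1) (by positivity)]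
    have : Gamma ((n : ℝ) + 1) ≠ 0 := (Gamma_pos_of_pos (by positivity)).ne'
    have : (n : ℝ) + 1 ≠ 0 := by positivity
    field_simp
    rw [div_eq_iff (by linarith)]
    ring

theorem sqrt_rpow_mul_besselI_eq_integral {ν c : ℝ} (hν : 1 / 2 < ν) (hc : 0 ≤ c) (q : ℝ) :
    √q ^ ν * besselI ν (c * √q) =
      (c / 2) ^ ν / (√π * Gamma (ν + 1 / 2)) *
        ∫ w, exp (c * w) * max (q - w ^ 2) 0 ^ (ν - 1 / 2) := by
  have hsplit : (c * √q / 2) ^ ν = (c / 2) ^ ν * √q ^ ν := by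
    rw [mul_div_right_comm, mul_rpow (by positivity) (sqrt_nonneg q)]
  have hsq : √q ^ ν * √q ^ ν = max q 0 ^ ν := by
    rw [← mul_rpow (sqrt_nonneg q) (sqrt_nonneg q), ← pow_two, sq_sqrt']
  rw [integral_mul_max_sub_sq_rpow _ q (by linarith), sub_add_cancel, besselI, hsplit, ← hsq]
  simp only [mul_assoc c]
  ring

theorem integral_sqrt_pow_mul_besselI {c : ℝ} (hc : 0 ≤ c) {m : ℕ} (hm : 1 ≤ m) (d : ℝ) :
    ∫ u, √(d - u ^ 2) ^ m * besselI m (c * √(d - u ^ 2)) =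
      (c / 2) ^ (m : ℝ) / Gamma (m + 1) * ∫ w, exp (c * w) * max (d - w ^ 2) 0 ^ (m : ℝ) := by
  have hm' : (1 : ℝ) ≤ m := by exact_mod_cast hm
  have hinner := fun q => integral_max_sub_sq_rpow q (by linarith : (0 : ℝ) < m - 1 / 2)
  have hG : Gamma ((m : ℝ) + 1 / 2) ≠ 0 := (Gamma_pos_of_pos (by positivity)).ne'
  have hpi : √π ≠ 0 := (sqrt_pos.mpr pi_pos).ne'
  have hslice : ∀ u, √(d - u ^ 2) ^ m * besselI m (c * √(d - u ^ 2)) =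
      (c / 2) ^ (m : ℝ) / (√π * Gamma (m + 1 / 2)) *
        ∫ w, exp (c * w) * max (d - u ^ 2 - w ^ 2) 0 ^ ((m : ℝ) - 1 / 2) := fun u => by
    rw [← rpow_natCast, sqrt_rpow_mul_besselI_eq_integral (by linarith) hc]
  simp_rw [hslice]
  rw [integral_const_mul, integral_integral_mul_max_sub_sq_sub_sq_rpow_swap (by fun_prop) d
      (by linarith : (0 : ℝ) < m - 1 / 2)]
  simp_rw [hinner, sub_add_cancel, integral_one_sub_sq_rpow_natCast_sub_half hm, ← mul_assoc,
    integral_mul_const]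
  field_simp

theorem sqrt_two_pi_div_mul_besselI_add_half {c : ℝ} (hc : 0 < c) {m : ℕ} (hm : 1 ≤ m) {b : ℝ}
    (hb : 0 ≤ b) :
    √(2 * π / c) * (b ^ ((m : ℝ) + 1 / 2) * besselI (m + 1 / 2) (c * b)) =
      (c / 2) ^ (m : ℝ) / Gamma (m + 1) * ∫ w, exp (c * w) * max (b ^ 2 - w ^ 2) 0 ^ (m : ℝ) := by
  have hbessel := sqrt_rpow_mul_besselI_eq_integral (ν := m + 1 / 2)
    (by linarith [show (1 : ℝ) ≤ m by exact_mod_cast hm]) hc.le (b ^ 2)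
  rw [sqrt_sq hb, add_sub_cancel_right, add_assoc, add_halves] at hbessel
  have hconst : √(2 * π / c) * (c / 2) ^ ((m : ℝ) + 1 / 2) = √π * (c / 2) ^ (m : ℝ) := by
    rw [rpow_add (by positivity), ← sqrt_eq_rpow, mul_left_comm, ← sqrt_mul (by positivity),
      show 2 * π / c * (c / 2) = π by field_simp, mul_comm]
  have hpi : √π ≠ 0 := (sqrt_pos.mpr pi_pos).ne'
  rw [hbessel, ← mul_assoc, mul_div_assoc', hconst]
  field_simp

/-- Outside the ball `√(1 - (‖x‖ / a) ^ 2)` is the junk value `0`, which kills the formula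
once `m ≥ 1`. -/
theorem kbwf_eq_of_one_le {a : ℝ} (ha : 0 < a) (α : ℝ) {m : ℕ} (hm : 1 ≤ m) (x : Fin 3 → ℝ) :
    kbwf a α m x = 1 / besselI m α * √(1 - (euclNorm x / a) ^ 2) ^ m *
      besselI m (α * √(1 - (euclNorm x / a) ^ 2)) := by
  rw [kbwf, ite_eq_left_iff]
  intro hx
  have : 1 < (euclNorm x / a) ^ 2 := one_lt_pow₀ ((one_lt_div ha).mpr (not_le.mp hx)) two_ne_zero
  rw [sqrt_eq_zero_of_nonpos (by linarith), zero_pow (by omega), mul_zero, zero_mul]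

theorem euclNorm_vecCons_sq (y : Fin 2 → ℝ) (z : ℝ) :
    euclNorm ![y 0, y 1, z] ^ 2 = euclNorm y ^ 2 + z ^ 2 := by
  simp only [euclNorm, Fin.sum_univ_two, Fin.sum_univ_three]
  rw [sq_sqrt (by positivity), sq_sqrt (by positivity)]
  simp

theorem kbwf_vecCons {a : ℝ} (ha : 0 < a) (α : ℝ) {m : ℕ} (hm : 1 ≤ m) {y : Fin 2 → ℝ}
    (hy : euclNorm y ≤ a) (z : ℝ) :
    kbwf a α m ![y 0, y 1, z] =
      1 / besselI m α * √(betaA a (euclNorm y) ^ 2 - (z / a) ^ 2) ^ m *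
        besselI m (α * √(betaA a (euclNorm y) ^ 2 - (z / a) ^ 2)) := by
  have hr : (euclNorm y / a) ^ 2 ≤ 1 := by
    rw [div_pow, div_le_one (by positivity)]
    exact pow_le_pow_left₀ (sqrt_nonneg _) hy 2
  have harg : 1 - (euclNorm ![y 0, y 1, z] / a) ^ 2 = betaA a (euclNorm y) ^ 2 - (z / a) ^ 2 := by
    rw [betaA, sq_sqrt (by linarith), div_pow, euclNorm_vecCons_sq]
    ring
  rw [kbwf_eq_of_one_le ha α hm, harg]

theorem xray_kbwf_eq_integral {a : ℝ} (ha : 0 < a) (α : ℝ) {m : ℕ} (hm : 1 ≤ m)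
    {y : Fin 2 → ℝ} (hy : euclNorm y ≤ a) :
    xray (kbwf a α m) y = a / besselI m α *
      ∫ u, √(betaA a (euclNorm y) ^ 2 - u ^ 2) ^ m *
        besselI m (α * √(betaA a (euclNorm y) ^ 2 - u ^ 2)) := by
  simp only [xray, kbwf_vecCons ha α hm hy, mul_assoc (1 / besselI m α)]
  rw [Measure.integral_comp_div (fun u => 1 / besselI m α *
      (√(betaA a (euclNorm y) ^ 2 - u ^ 2) ^ m *
        besselI m (α * √(betaA a (euclNorm y) ^ 2 - u ^ 2)))) a,
    abs_of_pos ha, smul_eq_mul, integral_const_mul]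
  ring

/-- Closed form of the X-ray projection of the Kaiser–Bessel window function: for `‖y‖ ≤ a`,
`P(φ)(y) = a · A · β_a(‖y‖)^{m + 1/2} · I_{m + 1/2}(α · β_a(‖y‖))` with
`A = √(2π/α) / I_m(α)`. -/
theorem xray_kbwf (a α : ℝ) (m : ℕ) (ha : a > 0) (hα : α > 0) (hm : 1 ≤ m)
    (y : Fin 2 → ℝ) (hy : euclNorm y ≤ a) :
    xray (kbwf a α m) y =
      a * (Real.sqrt (2 * Real.pi / α) / besselI m α) *
        betaA a (euclNorm y) ^ ((m : ℝ) + 1 / 2) *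
          besselI ((m : ℝ) + 1 / 2) (α * betaA a (euclNorm y)) := by
  have hrhs := sqrt_two_pi_div_mul_besselI_add_half hα hm
    (b := betaA a (euclNorm y)) (sqrt_nonneg _)
  rw [xray_kbwf_eq_integral ha α hm hy, integral_sqrt_pow_mul_besselI hα.le hm]
  linear_combination (-(a / besselI m α)) * hrhs
end

section
/- Let a > 0, α > 0 and let m ≥ 1 be a natural number. Let φ be the Kaiser–Bessel window function with parameters (a, α, m) and P(φ)(y) = ∫_ℝ φ(y₁, y₂, z) dz its X-ray projection. Then for every y ∈ ℝ² with ‖y‖ < a and each coordinate index v ∈ {1, 2}, the partial derivative of P(φ) with respect to y_v exists at y and equals ∂P(φ)/∂y_v (y) = −(α · y_v · A / a) · β_a(‖y‖)^{m − 1/2} · I_{m − 1/2}(α · β_a(‖y‖)), where A = √(2π/α) / I_m(α) and β_a(r) = √(1 − (r/a)²). -/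
/-! Substituting `s = β t`, `β = β_a(‖x‖)`, in the Poisson integral writes the window as
`φ(x) = C ∫ e^{αs} (1 - ‖x‖²/a² - s²)₊^{m-1/2} ds`. Integrating out the third coordinate
(Fubini, then the same substitution) raises the exponent by `1/2`:
`P(φ)(y) = C a B ∫ e^{αs} (q - s²)₊^m ds` with `q = 1 - ‖y‖²/a²` and
`B = ∫ (1 - t²)^{m-1/2} dt = √π Γ(m+1/2) / m!`. The last integral is `q^{m+1/2} J_m(α√q)` with
`J_m(x) = ∫_{-1}^{1} e^{xt} (1-t²)^m dt`, and an integration by parts in `J_m` shows that its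
`q`-derivative is `m q^{m-1/2} J_{m-1}(α√q)`; this is the classical `(x^ν I_ν)' = x^ν I_{ν-1}`.
The chain rule through `q` gives the formula. -/

open MeasureTheory

open Real Set

lemma max_zero_rpow_of_nonpos {p c : ℝ} (hp : 0 < p) (hc : c ≤ 0) : max 0 c ^ p = 0 := by
  rw [max_eq_left hc, zero_rpow hp.ne']

lemma sqrt_rpow_two_mul_add_one {q : ℝ} (p : ℝ) (hq : 0 ≤ q) :
    √q ^ (2 * p + 1) = q ^ (p + 1 / 2) := by
  rw [sqrt_eq_rpow, ← rpow_mul hq]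
  ring_nf

lemma euclNorm_sq {n : ℕ} (x : Fin n → ℝ) : euclNorm x ^ 2 = ∑ i, x i ^ 2 :=
  sq_sqrt (by positivity)

lemma euclNorm_update_sq {n : ℕ} (x : Fin n → ℝ) (i : Fin n) (t : ℝ) :
    euclNorm (Function.update x i t) ^ 2 = euclNorm x ^ 2 - x i ^ 2 + t ^ 2 := by
  rw [euclNorm_sq, euclNorm_sq, ← Finset.add_sum_erase _ _ (Finset.mem_univ i),
    ← Finset.add_sum_erase _ _ (Finset.mem_univ i), Function.update_self]
  rw [Finset.sum_congr rfl fun j hj => by rw [Function.update_of_ne (Finset.ne_of_mem_erase hj)]]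
  ring

lemma one_sub_div_sq_pos {a r : ℝ} (ha : 0 < a) (hr : 0 ≤ r) (hra : r < a) :
    0 < 1 - (r / a) ^ 2 := by
  have h0 : 0 ≤ r / a := div_nonneg hr ha.le
  have h1 : r / a < 1 := (div_lt_one ha).2 hra
  nlinarith

lemma hasDerivAt_one_sub_euclNorm_update_div_sq {n : ℕ} (a : ℝ) (x : Fin n → ℝ) (i : Fin n) :
    HasDerivAt (fun t => 1 - (euclNorm (Function.update x i t) / a) ^ 2) (-(2 * x i / a ^ 2))
      (x i) := by
  simp only [div_pow, euclNorm_update_sq]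
  refine ((((hasDerivAt_pow 2 (x i)).const_add _).div_const (a ^ 2)).const_sub 1).congr_deriv ?_
  ring

lemma hasDerivAt_intervalIntegral_of_continuous {F F' : ℝ → ℝ → ℝ} {a b : ℝ}
    (hF : Continuous F.uncurry) (hF' : Continuous F'.uncurry)
    (hderiv : ∀ x t, HasDerivAt (F · t) (F' x t) x) (x₀ : ℝ) :
    HasDerivAt (fun x => ∫ t in a..b, F x t) (∫ t in a..b, F' x₀ t) x₀ := by
  obtain ⟨C, hC⟩ := ((isCompact_closedBall x₀ 1).prod isCompact_uIcc).exists_bound_of_continuousOn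
    hF'.continuousOn
  refine (intervalIntegral.hasDerivAt_integral_of_dominated_loc_of_deriv_le
    (bound := fun _ => C) (Metric.closedBall_mem_nhds x₀ one_pos)
    (.of_forall fun x => (hF.comp (.prodMk_right x)).aestronglyMeasurable)
    ((hF.comp (.prodMk_right x₀)).intervalIntegrable a b)
    (hF'.comp (.prodMk_right x₀)).aestronglyMeasurable
    (.of_forall fun t ht x hx => hC (x, t) ⟨hx, uIoc_subset_uIcc ht⟩)
    intervalIntegrable_const (.of_forall fun t _ x _ => hderiv x t)).2

lemma integral_one_sub_sq_rpow_add_one_s4 {ν : ℝ} (hν : 0 < ν) :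
    (2 * ν + 3) * ∫ t in (-1 : ℝ)..1, (1 - t ^ 2) ^ (ν + 1) =
      (2 * ν + 2) * ∫ t in (-1 : ℝ)..1, (1 - t ^ 2) ^ ν := by
  have hcont : ∀ p : ℝ, 0 < p → Continuous fun t : ℝ => (1 - t ^ 2) ^ p := fun p hp =>
    (by fun_prop : Continuous fun t : ℝ => 1 - t ^ 2).rpow_const fun _ => Or.inr hp.le
  have hderiv : ∀ t ∈ uIcc (-1 : ℝ) 1, HasDerivAt (fun t => t * (1 - t ^ 2) ^ (ν + 1))
      ((2 * ν + 3) * (1 - t ^ 2) ^ (ν + 1) - (2 * ν + 2) * (1 - t ^ 2) ^ ν) t := by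
    intro t ht
    rw [uIcc_of_le (by norm_num), mem_Icc] at ht
    have hbase : 0 ≤ 1 - t ^ 2 := by nlinarith
    have hpow := (hasDerivAt_rpow_const (x := 1 - t ^ 2) (p := ν + 1) (Or.inr (by linarith))).comp t
      ((hasDerivAt_pow 2 t).const_sub 1)
    refine ((hasDerivAt_id t).mul hpow).congr_deriv ?_
    simp only [id, Function.comp_apply, add_sub_cancel_right,
      rpow_add_one' hbase (by linarith : ν + 1 ≠ 0)]
    push_cast
    ring
  have hI1 := (hcont (ν + 1) (by linarith)).intervalIntegrable (μ := volume) (-1) 1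
  have hI0 := (hcont ν hν).intervalIntegrable (μ := volume) (-1) 1
  have hFTC := intervalIntegral.integral_eq_sub_of_hasDerivAt hderiv
    ((hI1.const_mul (2 * ν + 3)).sub (hI0.const_mul (2 * ν + 2)))
  rw [intervalIntegral.integral_sub (hI1.const_mul _) (hI0.const_mul _),
    intervalIntegral.integral_const_mul, intervalIntegral.integral_const_mul] at hFTC
  norm_num [zero_rpow (by linarith : ν + 1 ≠ 0)] at hFTC
  linarith

lemma integral_one_sub_sq_rpow_nat_add_half (k : ℕ) :
    ∫ t in (-1 : ℝ)..1, (1 - t ^ 2) ^ ((k : ℝ) + 1 / 2) =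
      √π * Gamma (k + 3 / 2) / (k + 1).factorial := by
  induction k with
  | zero =>
    simp only [CharP.cast_eq_zero, zero_add, ← sqrt_eq_rpow, integral_sqrt_one_sub_sq]
    rw [show (3 / 2 : ℝ) = 1 / 2 + 1 by norm_num, Gamma_add_one (by norm_num), Gamma_one_half_eq]
    norm_num
    linear_combination (-1 / 2 : ℝ) * mul_self_sqrt pi_pos.le
  | succ k ih =>
    have hstep := integral_one_sub_sq_rpow_add_one_s4 (ν := k + 1 / 2) (by positivity)
    rw [ih] at hstep
    rw [show ((k + 1 : ℕ) : ℝ) + 1 / 2 = k + 1 / 2 + 1 by push_cast; ring,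
      show ((k + 1 : ℕ) : ℝ) + 3 / 2 = k + 3 / 2 + 1 by push_cast; ring,
      Gamma_add_one (by positivity), Nat.factorial_succ (k + 1)]
    have : (0 : ℝ) < 2 * (k + 1 / 2) + 3 := by positivity
    field_simp at hstep ⊢
    push_cast at hstep ⊢
    linear_combination hstep

/-- For `c = 1` this is the integral in `besselI (p + 1/2) x`. Since `0 ^ 0 = 1` for `rpow`, the
truncation only acts for `0 < p`. -/
noncomputable def poissonIntegral (p x c : ℝ) : ℝ :=
  ∫ s : ℝ, exp (x * s) * max 0 (c - s ^ 2) ^ p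

lemma poissonIntegral_of_nonpos {p c : ℝ} (x : ℝ) (hp : 0 < p) (hc : c ≤ 0) :
    poissonIntegral p x c = 0 := by
  have h : ∀ s : ℝ, exp (x * s) * max 0 (c - s ^ 2) ^ p = 0 := fun s => by
    rw [max_zero_rpow_of_nonpos hp (by nlinarith), mul_zero]
  simp only [poissonIntegral, h, integral_zero]

lemma poissonIntegral_one {p : ℝ} (x : ℝ) (hp : 0 < p) :
    poissonIntegral p x 1 = ∫ t in (-1 : ℝ)..1, exp (x * t) * (1 - t ^ 2) ^ p := by
  rw [intervalIntegral.integral_of_le (by norm_num), poissonIntegral,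
    ← setIntegral_eq_integral_of_forall_compl_eq_zero]
  · refine setIntegral_congr_fun measurableSet_Ioc fun t ht => ?_
    rw [max_eq_right (by nlinarith [ht.1, ht.2])]
  · intro t ht
    rw [mem_Ioc, not_and_or, not_lt, not_le] at ht
    rw [max_zero_rpow_of_nonpos hp (by rcases ht with ht | ht <;> nlinarith), mul_zero]

lemma poissonIntegral_sq {c : ℝ} (p x : ℝ) (hc : 0 < c) :
    poissonIntegral p x (c ^ 2) = c ^ (2 * p + 1) * poissonIntegral p (x * c) 1 := by
  have hscale : ∀ s : ℝ, exp (x * s) * max 0 (c ^ 2 - s ^ 2) ^ p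
      = c ^ (2 * p) * (exp (x * c * (s / c)) * max 0 (1 - (s / c) ^ 2) ^ p) := fun s => by
    have hmax : max 0 (c ^ 2 - s ^ 2) = c ^ 2 * max 0 (1 - (s / c) ^ 2) := by
      rw [mul_max_of_nonneg _ _ (sq_nonneg c), mul_zero]
      field_simp
    rw [hmax, mul_rpow (sq_nonneg c) (le_max_left _ _), ← rpow_natCast, ← rpow_mul hc.le,
      show x * c * (s / c) = x * s by field_simp]
    push_cast
    ring
  simp only [poissonIntegral, hscale, integral_const_mul,
    Measure.integral_comp_div (fun t => exp (x * c * t) * max 0 (1 - t ^ 2) ^ p), smul_eq_mul,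
    abs_of_pos hc, rpow_add hc, rpow_one]
  ring

lemma poissonIntegral_zero_left {p : ℝ} (hp : 0 < p) (c : ℝ) :
    poissonIntegral p 0 c = max 0 c ^ (p + 1 / 2) * poissonIntegral p 0 1 := by
  rcases le_or_gt c 0 with hc | hc
  · rw [poissonIntegral_of_nonpos 0 hp hc, max_zero_rpow_of_nonpos (by linarith) hc, zero_mul]
  · conv_lhs => rw [← sq_sqrt hc.le]
    rw [poissonIntegral_sq _ _ (sqrt_pos.2 hc), zero_mul, sqrt_rpow_two_mul_add_one _ hc.le,
      max_eq_right hc.le]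

lemma poissonIntegral_nat_add_half_zero_one (n : ℕ) :
    poissonIntegral (n + 1 / 2) 0 1 = √π * Gamma (n + 3 / 2) / (n + 1).factorial := by
  rw [poissonIntegral_one 0 (by positivity), ← integral_one_sub_sq_rpow_nat_add_half]
  simp only [zero_mul, exp_zero, one_mul]

lemma integral_poissonIntegral_sub_sq {p : ℝ} (hp : 0 < p) (x c : ℝ) :
    ∫ u : ℝ, poissonIntegral p x (c - u ^ 2) =
      poissonIntegral p 0 1 * poissonIntegral (p + 1 / 2) x c := by
  set F : ℝ → ℝ → ℝ := fun u s => exp (x * s) * max 0 (c - u ^ 2 - s ^ 2) ^ p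
  have hF : Continuous F.uncurry :=
    (by fun_prop : Continuous fun us : ℝ × ℝ => exp (x * us.2)).mul
      ((by fun_prop : Continuous fun us : ℝ × ℝ => max 0 (c - us.1 ^ 2 - us.2 ^ 2)).rpow_const
        fun _ => Or.inr hp.le)
  have hFsupp : HasCompactSupport F.uncurry := by
    set R := |c| + 1
    refine HasCompactSupport.intro
      ((isCompact_Icc (a := -R) (b := R)).prod (isCompact_Icc (a := -R) (b := R))) ?_
    rintro ⟨u, s⟩ hus
    have hR : c ≤ R ^ 2 := by nlinarith [le_abs_self c, abs_nonneg c]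
    have hout : c < u ^ 2 ∨ c < s ^ 2 := by
      by_contra! h
      exact hus ⟨abs_le_of_sq_le_sq' (h.1.trans hR) (by positivity),
        abs_le_of_sq_le_sq' (h.2.trans hR) (by positivity)⟩
    change exp (x * s) * max 0 (c - u ^ 2 - s ^ 2) ^ p = 0
    rw [max_zero_rpow_of_nonpos hp (by rcases hout with h | h <;> nlinarith), mul_zero]
  have hinner : ∀ s : ℝ, ∫ u : ℝ, F u s = exp (x * s) * poissonIntegral p 0 (c - s ^ 2) := by
    intro s
    simp only [F, poissonIntegral, zero_mul, exp_zero, one_mul, ← integral_const_mul]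
    congr with u
    ring_nf
  calc ∫ u : ℝ, poissonIntegral p x (c - u ^ 2)
      = ∫ s : ℝ, ∫ u : ℝ, F u s := integral_integral_swap_of_hasCompactSupport hF hFsupp
    _ = ∫ s : ℝ, poissonIntegral p 0 1 * (exp (x * s) * max 0 (c - s ^ 2) ^ (p + 1 / 2)) := by
      congr with s
      rw [hinner, poissonIntegral_zero_left hp (c - s ^ 2)]
      ring
    _ = poissonIntegral p 0 1 * poissonIntegral (p + 1 / 2) x c := integral_const_mul _ _

noncomputable def poissonJ (n : ℕ) (x : ℝ) : ℝ :=
  ∫ t in (-1 : ℝ)..1, exp (x * t) * (1 - t ^ 2) ^ n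

lemma poissonIntegral_natCast {n : ℕ} (x : ℝ) (hn : n ≠ 0) {q : ℝ} (hq : 0 < q) :
    poissonIntegral n x q = q ^ n * √q * poissonJ n (x * √q) := by
  conv_lhs => rw [← sq_sqrt hq.le]
  rw [poissonIntegral_sq _ _ (sqrt_pos.2 hq), sqrt_rpow_two_mul_add_one _ hq.le,
    rpow_add hq, rpow_natCast, ← sqrt_eq_rpow, poissonIntegral_one _ (by positivity), poissonJ]
  simp only [rpow_natCast]

lemma hasDerivAt_poissonJ (n : ℕ) (x : ℝ) :
    HasDerivAt (poissonJ n) (∫ t in (-1 : ℝ)..1, t * exp (x * t) * (1 - t ^ 2) ^ n) x :=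
  hasDerivAt_intervalIntegral_of_continuous (F := fun x t => exp (x * t) * (1 - t ^ 2) ^ n)
    (F' := fun x t => t * exp (x * t) * (1 - t ^ 2) ^ n) (by fun_prop) (by fun_prop)
    (fun x t => ((hasDerivAt_mul_const t).exp.mul_const _).congr_deriv (by ring)) x

lemma mul_integral_mul_exp_mul_one_sub_sq_pow_succ (n : ℕ) (x : ℝ) :
    x * ∫ t in (-1 : ℝ)..1, t * exp (x * t) * (1 - t ^ 2) ^ (n + 1) =
      2 * (n + 1) * poissonJ n x - (2 * n + 3) * poissonJ (n + 1) x := by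
  have hderiv : ∀ t : ℝ, HasDerivAt (fun t => t * exp (x * t) * (1 - t ^ 2) ^ (n + 1))
      (x * (t * exp (x * t) * (1 - t ^ 2) ^ (n + 1)) +
        ((2 * n + 3) * (exp (x * t) * (1 - t ^ 2) ^ (n + 1)) -
          2 * (n + 1) * (exp (x * t) * (1 - t ^ 2) ^ n))) t := fun t => by
    have hpow := (((hasDerivAt_pow 2 t).const_sub 1).pow (n + 1))
    refine (((hasDerivAt_id t).mul ((hasDerivAt_id t).const_mul x).exp).mul hpow).congr_deriv ?_
    simp only [Nat.add_sub_cancel, Pi.mul_apply, Pi.pow_apply, id, Nat.cast_add, Nat.cast_one]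
    ring
  have hint : ∀ k : ℕ, IntervalIntegrable (fun t => exp (x * t) * (1 - t ^ 2) ^ k) volume (-1) 1 :=
    fun k => (by fun_prop : Continuous _).intervalIntegrable _ _
  have hFTC := intervalIntegral.integral_eq_sub_of_hasDerivAt (a := -1) (b := 1)
    (fun t _ => hderiv t)
    ((by fun_prop : Continuous _).intervalIntegrable _ _)
  rw [intervalIntegral.integral_add ((by fun_prop : Continuous _).intervalIntegrable _ _)
      (((hint _).const_mul _).sub ((hint _).const_mul _)),
    intervalIntegral.integral_sub ((hint _).const_mul _) ((hint _).const_mul _),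
    intervalIntegral.integral_const_mul, intervalIntegral.integral_const_mul,
    intervalIntegral.integral_const_mul] at hFTC
  norm_num at hFTC
  rw [poissonJ, poissonJ]
  linarith

lemma hasDerivAt_poissonIntegral_natCast_succ (n : ℕ) (x : ℝ) {b : ℝ} (hb : 0 < b) :
    HasDerivAt (poissonIntegral (n + 1 : ℕ) x) ((n + 1) * ((b ^ 2) ^ n * b * poissonJ n (x * b)))
      (b ^ 2) := by
  have hq : 0 < b ^ 2 := by positivity
  have hev : (fun r => r ^ (n + 1) * √r * poissonJ (n + 1) (x * √r)) =ᶠ[nhds (b ^ 2)]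
      poissonIntegral (n + 1 : ℕ) x := by
    filter_upwards [eventually_gt_nhds hq] with r hr
    exact (poissonIntegral_natCast x n.succ_ne_zero hr).symm
  have hsqrt := hasDerivAt_sqrt hq.ne'
  have hJ := (hasDerivAt_poissonJ (n + 1) (x * √(b ^ 2))).comp (b ^ 2) (hsqrt.const_mul x)
  refine ((((hasDerivAt_pow (n + 1) (b ^ 2)).mul hsqrt).mul hJ).congr_deriv
    ?_).congr_of_eventuallyEq hev.symm
  have hIBP := mul_integral_mul_exp_mul_one_sub_sq_pow_succ n (x * b)
  simp only [Function.comp_apply, Pi.mul_apply, sqrt_sq hb.le, Nat.add_sub_cancel, Nat.cast_add,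
    Nat.cast_one]
  rw [mul_comm x b] at hIBP ⊢
  field_simp
  linear_combination (b ^ 2) ^ (n + 1) * hIBP

lemma besselI_eq_poissonIntegral {ν : ℝ} (x : ℝ) (hν : 1 / 2 < ν) :
    besselI ν x = (x / 2) ^ ν / (√π * Gamma (ν + 1 / 2)) * poissonIntegral (ν - 1 / 2) x 1 := by
  rw [besselI, poissonIntegral_one x (by linarith)]

lemma besselI_nat_add_half (n : ℕ) (x : ℝ) :
    besselI (n + 1 / 2) x = (x / 2) ^ ((n : ℝ) + 1 / 2) / (√π * n.factorial) * poissonJ n x := by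
  rw [besselI, add_assoc, add_halves, Gamma_nat_eq_factorial, add_sub_cancel_right, poissonJ]
  simp only [rpow_natCast]

lemma kbwf_eq_poissonIntegral {a : ℝ} (α : ℝ) {m : ℕ} (ha : 0 < a) (hm : 1 ≤ m)
    (x : Fin 3 → ℝ) :
    kbwf a α m x = (α / 2) ^ m / (√π * Gamma (m + 1 / 2) * besselI m α) *
      poissonIntegral (m - 1 / 2) α (1 - (euclNorm x / a) ^ 2) := by
  have hp : (0 : ℝ) < m - 1 / 2 := by
    have : (1 : ℝ) ≤ m := by exact_mod_cast hm
    linarith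
  rcases le_or_gt (1 - (euclNorm x / a) ^ 2) 0 with hq | hq
  · rw [poissonIntegral_of_nonpos α hp hq, mul_zero, kbwf]
    split_ifs
    · rw [sqrt_eq_zero'.2 hq, zero_pow (by omega), mul_zero, zero_mul]
    · rfl
  · have hxa : euclNorm x ≤ a := by
      by_contra! h
      have : 1 < euclNorm x / a := (one_lt_div ha).2 h
      nlinarith
    set β := √(1 - (euclNorm x / a) ^ 2) with hβ
    have hβpos : 0 < β := sqrt_pos.2 hq
    have hexp : β ^ (2 * ((m : ℝ) - 1 / 2) + 1) = β ^ m * β ^ m := by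
      rw [← pow_add, ← rpow_natCast]
      push_cast
      ring_nf
    rw [kbwf, if_pos hxa, ← hβ, ← sq_sqrt hq.le, ← hβ, poissonIntegral_sq _ _ hβpos, hexp,
      besselI_eq_poissonIntegral (α * β) (by linarith), rpow_natCast, mul_div_assoc, mul_pow]
    ring

lemma xray_kbwf_eq {a : ℝ} (α : ℝ) {m : ℕ} (ha : 0 < a) (hm : 1 ≤ m) (y : Fin 2 → ℝ) :
    xray (kbwf a α m) y = (α / 2) ^ m / (√π * Gamma (m + 1 / 2) * besselI m α) *
      (a * poissonIntegral (m - 1 / 2) 0 1) * poissonIntegral m α (1 - (euclNorm y / a) ^ 2) := by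
  have hp : (0 : ℝ) < m - 1 / 2 := by
    have : (1 : ℝ) ≤ m := by exact_mod_cast hm
    linarith
  have hnorm : ∀ z : ℝ, 1 - (euclNorm ![y 0, y 1, z] / a) ^ 2
      = 1 - (euclNorm y / a) ^ 2 - (z / a) ^ 2 := fun z => by
    simp only [div_pow, euclNorm_sq, Fin.sum_univ_three, Fin.sum_univ_two]
    simp only [Matrix.cons_val_zero, Matrix.cons_val_one, Matrix.cons_val_two, Matrix.head_cons,
      Matrix.tail_cons]
    ring
  have hsubst := Measure.integral_comp_div
    (fun u => poissonIntegral (m - 1 / 2) α (1 - (euclNorm y / a) ^ 2 - u ^ 2)) a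
  simp only [abs_of_pos ha, smul_eq_mul] at hsubst
  simp only [xray, kbwf_eq_poissonIntegral α ha hm, hnorm, integral_const_mul, hsubst,
    integral_poissonIntegral_sub_sq hp, sub_add_cancel]
  ring

lemma mul_sqrt_two_pi_div_mul_rpow {α b : ℝ} (hα : 0 < α) (hb : 0 ≤ b) (n : ℕ) :
    α * √(2 * π / α) * (b ^ ((n : ℝ) + 1 / 2) * (α * b / 2) ^ ((n : ℝ) + 1 / 2)) =
      2 * √π * (α / 2) ^ (n + 1) * ((b ^ 2) ^ n * b) := by
  have hhalf : ∀ c : ℝ, 0 ≤ c → c ^ ((n : ℝ) + 1 / 2) = c ^ n * √c := fun c hc => by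
    rw [rpow_add' hc (by positivity), rpow_natCast, sqrt_eq_rpow]
  rw [← mul_rpow hb (by positivity), show b * (α * b / 2) = α / 2 * b ^ 2 by ring,
    hhalf _ (by positivity), sqrt_mul (by positivity), sqrt_sq hb, mul_pow,
    show 2 * π / α = π * (α / 2)⁻¹ by field_simp, sqrt_mul pi_pos.le, sqrt_inv]
  have : √(α / 2) ≠ 0 := by positivity
  field_simp
  ring

/-- Partial derivative of the X-ray projection of the Kaiser–Bessel window function:
for `‖y‖ < a` and each coordinate index `v`,
`∂P(φ)/∂y_v (y) = −(α · y_v · A / a) · β_a(‖y‖)^{m − 1/2} · I_{m − 1/2}(α · β_a(‖y‖))`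
with `A = √(2π/α) / I_m(α)`. -/
theorem hasDerivAt_xray_kbwf (a α : ℝ) (m : ℕ) (ha : a > 0) (hα : α > 0) (hm : 1 ≤ m)
    (y : Fin 2 → ℝ) (hy : euclNorm y < a) (v : Fin 2) :
    HasDerivAt (fun t : ℝ => xray (kbwf a α m) (Function.update y v t))
      (-(α * y v * (Real.sqrt (2 * Real.pi / α) / besselI m α) / a) *
          betaA a (euclNorm y) ^ ((m : ℝ) - 1 / 2) *
            besselI ((m : ℝ) - 1 / 2) (α * betaA a (euclNorm y)))
      (y v) := by
  obtain ⟨n, rfl⟩ : ∃ n, m = n + 1 := ⟨m - 1, by omega⟩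
  have hq := one_sub_div_sq_pos ha (sqrt_nonneg _) hy
  set b := betaA a (euclNorm y)
  have hb : 0 < b := sqrt_pos.2 hq
  have hb2 : b ^ 2 = 1 - (euclNorm y / a) ^ 2 := sq_sqrt hq.le
  have hderiv := ((hasDerivAt_poissonIntegral_natCast_succ n α hb).comp_of_eq (y v)
    (hasDerivAt_one_sub_euclNorm_update_div_sq a y v)
    (by rw [Function.update_eq_self, hb2])).const_mul
    ((α / 2) ^ (n + 1) / (√π * Gamma ((n + 1 : ℕ) + 1 / 2) * besselI (n + 1 : ℕ) α) *
      (a * poissonIntegral (n + 1 / 2) 0 1))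
  have hν : ((n + 1 : ℕ) : ℝ) - 1 / 2 = n + 1 / 2 := by push_cast; ring
  simp only [xray_kbwf_eq α ha hm, hν]
  refine hderiv.congr_deriv ?_
  have key := mul_sqrt_two_pi_div_mul_rpow hα hb.le n
  have hΓ : Gamma (n + 3 / 2) ≠ 0 := (Gamma_pos_of_pos (by positivity)).ne'
  rw [poissonIntegral_nat_add_half_zero_one, besselI_nat_add_half,
    show ((n + 1 : ℕ) : ℝ) + 1 / 2 = n + 3 / 2 by push_cast; ring]
  -- keeps `field_simp` away from the exponent
  generalize (n : ℝ) + 1 / 2 = ν at key ⊢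
  rw [Nat.factorial_succ, Nat.cast_mul]
  field_simp
  push_cast
  linear_combination ((n + 1) * poissonJ n (α * b) * y v / besselI (n + 1) α) * key
end
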